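/- arXiv:1005.2894 — 6 statements merged into one kernel-verified Lean document; each statement's English description precedes it below -/
import Mathlib

section
/- Let V be a finite nonempty set, let ρ ∈ (0,1), let μ > 2ρ/(1−ρ), and let D > 0. For each u ∈ V let L_u : ℝ → ℝ be differentiable with L_u(0) = 0. Assume: (i) for every t ≥ 0 and every u ∈ V with L_u(t) = max_{v∈V} L_v(t), the derivative satisfies L_u'(t) ≤ 1+ρ; (ii) for every t ≥ 0 and every u ∈ V with L_u(t) = min_{v∈V} L_v(t) and max_{v∈V} L_v(t) − min_{v∈V} L_v(t) ≥ 2(1+ρ)D, the derivative satisfies L_u'(t) ≥ (1−ρ)(1+μ). Then for all t ≥ 0 and all u, v ∈ V, L_u(t) − L_v(t) ≤ 2(1+ρ)D. -/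
open Set Filter Finset
open scoped Topology


/-- Global skew bound (Theorem 1, analytical core): if every node holding the
maximal logical clock runs at rate at most `1+ρ`, and whenever the global skew
is at least `2(1+ρ)D` every node holding the minimal logical clock runs at rate
at least `(1-ρ)(1+μ)`, then the global skew never exceeds `2(1+ρ)D`. -/
theorem global_skew_bound
    {V : Type*} [Fintype V] [Nonempty V]
    (ρ μ D : ℝ) (hρ : ρ ∈ Set.Ioo (0 : ℝ) 1) (hμ : μ > 2 * ρ / (1 - ρ)) (hD : D > 0)
    (L : V → ℝ → ℝ)
    (hdiff : ∀ u, Differentiable ℝ (L u))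
    (hinit : ∀ u, L u 0 = 0)
    (hmax : ∀ t : ℝ, 0 ≤ t → ∀ u : V,
      L u t = Finset.univ.sup' Finset.univ_nonempty (fun v => L v t) →
      deriv (L u) t ≤ 1 + ρ)
    (hmin : ∀ t : ℝ, 0 ≤ t → ∀ u : V,
      L u t = Finset.univ.inf' Finset.univ_nonempty (fun v => L v t) →
      Finset.univ.sup' Finset.univ_nonempty (fun v => L v t) -
        Finset.univ.inf' Finset.univ_nonempty (fun v => L v t) ≥ 2 * (1 + ρ) * D →
      deriv (L u) t ≥ (1 - ρ) * (1 + μ)) :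
    ∀ t : ℝ, 0 ≤ t → ∀ u v : V, L u t - L v t ≤ 2 * (1 + ρ) * D := by
  classical
  have hρ0 : 0 < ρ := hρ.1
  have hρ1 : ρ < 1 := hρ.2
  have h1ρ : 0 < 1 - ρ := by linarith
  have hμρ : μ * (1 - ρ) > 2 * ρ := by
    have := (div_lt_iff₀ h1ρ).mp hμ; linarith
  set Bv : ℝ := 2 * (1 + ρ) * D with hBv
  have hBvpos : 0 < Bv := by positivity
  set g : V × V → ℝ → ℝ := fun p t => L p.1 t - L p.2 t with hg
  have hgdiff : ∀ p, Differentiable ℝ (g p) := fun p => (hdiff p.1).sub (hdiff p.2)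
  have hne : (Finset.univ : Finset (V × V)).Nonempty := Finset.univ_nonempty
  set F : ℝ → ℝ := fun t => Finset.univ.sup' hne (fun p => g p t) with hF
  have hle : ∀ p t, g p t ≤ F t := fun p t => Finset.le_sup' (fun q => g q t) (Finset.mem_univ p)
  have hFcont : Continuous F := Continuous.finset_sup'_apply hne
    (fun p _ => ((hdiff p.1).continuous.sub (hdiff p.2).continuous))
  set S : ℝ → ℝ := fun t => Finset.univ.sup' Finset.univ_nonempty (fun v => L v t) with hS
  set I : ℝ → ℝ := fun t => Finset.univ.inf' Finset.univ_nonempty (fun v => L v t) with hI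
  have hFSI : ∀ t, F t = S t - I t := by
    intro t
    apply le_antisymm
    · apply Finset.sup'_le
      intro p _
      have h1 : L p.1 t ≤ S t := Finset.le_sup' (fun v => L v t) (Finset.mem_univ p.1)
      have h2 : I t ≤ L p.2 t := Finset.inf'_le (fun v => L v t) (Finset.mem_univ p.2)
      simp only [hg]; linarith
    · obtain ⟨a, _, ha⟩ := Finset.exists_mem_eq_sup' Finset.univ_nonempty (fun v => L v t)
      obtain ⟨b, _, hb⟩ := Finset.exists_mem_eq_inf' Finset.univ_nonempty (fun v => L v t)
      have h3 := hle (a, b) t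
      simp only [hg] at h3
      have ha' : S t = L a t := ha
      have hb' : I t = L b t := hb
      show S t - I t ≤ F t
      rw [ha', hb']; exact h3
  have hactne : ∀ x : ℝ, (Finset.univ.filter (fun p : V × V => g p x = F x)).Nonempty := by
    intro x
    obtain ⟨p, _, hp⟩ := Finset.exists_mem_eq_sup' hne (fun p => g p x)
    exact ⟨p, Finset.mem_filter.mpr ⟨Finset.mem_univ p, hp.symm⟩⟩
  set f' : ℝ → ℝ := fun x => (Finset.univ.filter (fun p : V × V => g p x = F x)).sup'
    (hactne x) (fun p => deriv (g p) x) with hf'def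
  -- the key slope estimate
  have hslope : ∀ x : ℝ, ∀ r, f' x < r → ∃ᶠ z in 𝓝[>] x, slope F x z < r := by
    intro x r hr
    have hev : ∀ p : V × V, ∀ᶠ z in 𝓝[>] x, g p z < F x + r * (z - x) := by
      intro p
      by_cases hp : g p x = F x
      · have hd : deriv (g p) x < r := lt_of_le_of_lt
          (Finset.le_sup' (fun q => deriv (g q) x) (Finset.mem_filter.mpr ⟨Finset.mem_univ p, hp⟩)) hr
        have hder : HasDerivAt (g p) (deriv (g p) x) x := ((hgdiff p) x).hasDerivAt
        have h2 : ∀ᶠ z in 𝓝[≠] x, slope (g p) x z < r :=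
          (hasDerivAt_iff_tendsto_slope.mp hder) (Iio_mem_nhds hd)
        have h3 : ∀ᶠ z in 𝓝[>] x, slope (g p) x z < r :=
          h2.filter_mono (nhdsWithin_mono x (fun z hz => ne_of_gt hz))
        have h4 : ∀ᶠ z in 𝓝[>] x, x < z := self_mem_nhdsWithin
        filter_upwards [h3, h4] with z hsl hz
        have hzx : (0:ℝ) < z - x := sub_pos.mpr hz
        rw [slope_def_field] at hsl
        have h5 : g p z - g p x < r * (z - x) := by
          have := (div_lt_iff₀ hzx).mp hsl; linarith
        have hgle : g p x ≤ F x := hle p x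
        linarith
      · have hlt : g p x < F x := lt_of_le_of_ne (hle p x) hp
        have hcont : Tendsto (fun z => g p z - r * (z - x)) (𝓝 x) (𝓝 (g p x)) := by
          have h0 : Continuous (fun z : ℝ => g p z - r * (z - x)) :=
            (hgdiff p).continuous.sub (continuous_const.mul (continuous_id.sub continuous_const))
          simpa using h0.tendsto x
        have h1 : ∀ᶠ z in 𝓝 x, g p z - r * (z - x) < F x :=
          hcont.eventually_lt_const hlt
        have h2 : ∀ᶠ z in 𝓝[>] x, g p z - r * (z - x) < F x :=
          h1.filter_mono nhdsWithin_le_nhds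
        filter_upwards [h2] with z hz; linarith
    have hall : ∀ᶠ z in 𝓝[>] x, ∀ p : V × V, g p z < F x + r * (z - x) :=
      eventually_all.mpr hev
    have h4 : ∀ᶠ z in 𝓝[>] x, x < z := self_mem_nhdsWithin
    have hev2 : ∀ᶠ z in 𝓝[>] x, slope F x z < r := by
      filter_upwards [hall, h4] with z hz hxz
      have hFz : F z < F x + r * (z - x) := by
        apply (Finset.sup'_lt_iff hne).mpr
        intro p _; exact hz p
      have hzx : (0:ℝ) < z - x := sub_pos.mpr hxz
      rw [slope_def_field]
      rw [div_lt_iff₀ hzx]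
      linarith
    exact hev2.frequently
  -- main fencing argument on [0, t]
  intro t ht u v
  have key : F t ≤ Bv := by
    have := image_le_of_liminf_slope_right_lt_deriv_boundary'
      (f := F) (f' := f') (a := 0) (b := t)
      (hFcont.continuousOn)
      (fun x _ r hr => hslope x r hr)
      (B := fun _ => Bv) (B' := fun _ => 0)
      ?ha continuousOn_const
      (fun x _ => hasDerivWithinAt_const x _ Bv)
      ?bound
    · exact this (right_mem_Icc.mpr ht)
    · -- F 0 ≤ Bv
      have : F 0 = 0 := by
        apply le_antisymm
        · apply Finset.sup'_le; intro p _
          simp only [hg, hinit]; simp [hinit]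
        · obtain ⟨p, hp⟩ := hne
          have := hle p 0
          simp only [hg, hinit] at this ⊢
          simpa [hinit] using this
      rw [this]; exact hBvpos.le
    · -- bound: F x = Bv → f' x < 0
      intro x hx hFx
      rw [hf'def]
      apply (Finset.sup'_lt_iff (hactne x)).mpr
      intro p hp
      have hpx : g p x = F x := (Finset.mem_filter.mp hp).2
      have hSI : S x - I x = Bv := by rw [← hFSI]; exact hFx
      have h1 : L p.1 x ≤ S x := Finset.le_sup' (fun v => L v x) (Finset.mem_univ p.1)
      have h2 : I x ≤ L p.2 x := Finset.inf'_le (fun v => L v x) (Finset.mem_univ p.2)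
      have hgx : L p.1 x - L p.2 x = Bv := by rw [← hpx] at hFx; exact hFx
      have hmax1 : L p.1 x = S x := by linarith
      have hmin1 : L p.2 x = I x := by linarith
      have hd1 : deriv (L p.1) x ≤ 1 + ρ := hmax x hx.1 p.1 hmax1
      have hd2 : deriv (L p.2) x ≥ (1 - ρ) * (1 + μ) := by
        apply hmin x hx.1 p.2 hmin1
        show S x - I x ≥ Bv
        linarith [hSI]
      have hderg : deriv (g p) x = deriv (L p.1) x - deriv (L p.2) x := by
        simp only [hg]
        exact deriv_sub ((hdiff p.1) x) ((hdiff p.2) x)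
      show deriv (g p) x < 0
      rw [hderg]
      nlinarith [hμρ, hd1, hd2]
  have : L u t - L v t ≤ F t := hle (u, v) t
  linarith
end

section
/- Let V be a finite nonempty set, let a ∈ ℝ, and for each u ∈ V let L_u : ℝ → ℝ be differentiable. Assume that for every t ∈ ℝ and every u ∈ V with L_u(t) = max_{v∈V} L_v(t), the derivative satisfies L_u'(t) ≤ a. Then for all reals t₁ ≤ t₂, max_{v∈V} L_v(t₂) − max_{v∈V} L_v(t₁) ≤ a·(t₂ − t₁). -/
/-!
If `v` attains the maximum `M x` at time `x` and `(L v)'(x) ≤ a < r`, then `L v z < M x + r (z - x)`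
for `z` slightly to the right of `x`; a node strictly below the maximum at `x` stays below that
line by continuity. Hence the right upper Dini derivative of `M` is at most `a` everywhere, and a
continuous function with this property grows at rate at most `a`.
-/

open Set Filter Topology

theorem HasDerivAt.eventually_lt_add_mul_sub {f : ℝ → ℝ} {f' x m r : ℝ}
    (hf : HasDerivAt f f' x) (hle : f x ≤ m) (hlt : f x = m → f' < r) :
    ∀ᶠ z in 𝓝[>] x, f z < m + r * (z - x) := by
  rcases hle.lt_or_eq with hbelow | hmax
  · have hline : ContinuousAt (fun z => m + r * (z - x)) x := by fun_prop
    have hnear : ∀ᶠ z in 𝓝 x, f z < m + r * (z - x) :=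
      hf.continuousAt.eventually_lt hline (by simpa using hbelow)
    exact nhdsWithin_le_nhds hnear
  · have hslope : Tendsto (slope f x) (𝓝[>] x) (𝓝 f') :=
      (hasDerivAt_iff_tendsto_slope.1 hf).mono_left
        (nhdsWithin_mono x fun z hz => ne_of_gt hz)
    filter_upwards [hslope.eventually_lt_const (hlt hmax), self_mem_nhdsWithin] with z hz hxz
    rw [slope_def_field, div_lt_iff₀ (sub_pos.2 hxz)] at hz
    linarith

theorem eventually_slope_sup'_lt {ι : Type*} {s : Finset ι} (hs : s.Nonempty)
    {f : ι → ℝ → ℝ} {f' : ι → ℝ} {x a r : ℝ} (hf : ∀ i ∈ s, HasDerivAt (f i) (f' i) x)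
    (hmax : ∀ i ∈ s, f i x = s.sup' hs (fun j => f j x) → f' i ≤ a) (har : a < r) :
    ∀ᶠ z in 𝓝[>] x, slope (fun t => s.sup' hs (fun i => f i t)) x z < r := by
  have hbelow : ∀ᶠ z in 𝓝[>] x,
      s.sup' hs (fun i => f i z) < s.sup' hs (fun i => f i x) + r * (z - x) := by
    simp only [Finset.sup'_lt_iff, eventually_all_finset]
    exact fun i hi => (hf i hi).eventually_lt_add_mul_sub (Finset.le_sup' (f · x) hi)
      fun h => (hmax i hi h).trans_lt har
  filter_upwards [hbelow, self_mem_nhdsWithin] with z hz hxz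
  rw [slope_def_field, div_lt_iff₀ (sub_pos.2 hxz)]
  linarith

theorem sub_le_mul_sub_of_frequently_slope_lt {f : ℝ → ℝ} {a t₁ t₂ : ℝ}
    (hf : ContinuousOn f (Icc t₁ t₂)) (ht : t₁ ≤ t₂)
    (bound : ∀ x ∈ Ico t₁ t₂, ∀ r, a < r → ∃ᶠ z in 𝓝[>] x, slope f x z < r) :
    f t₂ - f t₁ ≤ a * (t₂ - t₁) := by
  have hline : ∀ x, HasDerivWithinAt (fun z => f t₁ + a * (z - t₁)) a (Ici x) x := fun x => by
    simpa using (((hasDerivWithinAt_id x (Ici x)).sub_const t₁).const_mul a).const_add (f t₁)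
  have := image_le_of_liminf_slope_right_le_deriv_boundary hf (by simp) (by fun_prop)
    (fun x _ => hline x) bound (right_mem_Icc.2 ht)
  linarith

/-- Envelope rate lemma (upper): if every node attaining the maximum clock
value runs at rate at most `a`, then the maximum clock value increases at
rate at most `a`. -/
theorem max_envelope_rate
    {V : Type*} [Fintype V] [Nonempty V]
    (a : ℝ) (L : V → ℝ → ℝ)
    (hdiff : ∀ u, Differentiable ℝ (L u))
    (hmax : ∀ t : ℝ, ∀ u : V,
      L u t = Finset.univ.sup' Finset.univ_nonempty (fun v => L v t) →
      deriv (L u) t ≤ a) :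
    ∀ t₁ t₂ : ℝ, t₁ ≤ t₂ →
      Finset.univ.sup' Finset.univ_nonempty (fun v => L v t₂) -
        Finset.univ.sup' Finset.univ_nonempty (fun v => L v t₁) ≤ a * (t₂ - t₁) := by
  intro t₁ t₂ ht
  have hcont : Continuous fun t => Finset.univ.sup' Finset.univ_nonempty (fun v => L v t) :=
    Continuous.finset_sup'_apply _ fun v _ => (hdiff v).continuous
  refine sub_le_mul_sub_of_frequently_slope_lt hcont.continuousOn ht fun x _ r har => ?_
  exact (eventually_slope_sup'_lt Finset.univ_nonempty
    (fun v _ => (hdiff v x).hasDerivAt) (fun v _ => hmax x v) har).frequently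
end

section
/- Let V be a finite nonempty set, let b ∈ ℝ, and for each u ∈ V let L_u : ℝ → ℝ be differentiable. Assume that for every t ∈ ℝ and every u ∈ V with L_u(t) = min_{v∈V} L_v(t), the derivative satisfies L_u'(t) ≥ b. Then for all reals t₁ ≤ t₂, min_{v∈V} L_v(t₂) − min_{v∈V} L_v(t₁) ≥ b·(t₂ − t₁). -/
open Set Filter Topology

/-- Envelope rate lemma (lower): if every node attaining the minimum clock
value runs at rate at least `b`, then the minimum clock value increases at
rate at least `b`. -/
theorem min_envelope_rate
    {V : Type*} [Fintype V] [Nonempty V]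
    (b : ℝ) (L : V → ℝ → ℝ)
    (hdiff : ∀ u, Differentiable ℝ (L u))
    (hmin : ∀ t : ℝ, ∀ u : V,
      L u t = Finset.univ.inf' Finset.univ_nonempty (fun v => L v t) →
      deriv (L u) t ≥ b) :
    ∀ t₁ t₂ : ℝ, t₁ ≤ t₂ →
      Finset.univ.inf' Finset.univ_nonempty (fun v => L v t₂) -
        Finset.univ.inf' Finset.univ_nonempty (fun v => L v t₁) ≥ b * (t₂ - t₁) := by
  intro t₁ t₂ h12
  set g : ℝ → ℝ := fun t => Finset.univ.inf' Finset.univ_nonempty (fun v => L v t) with hg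
  have hgle : ∀ v t, g t ≤ L v t := fun v t =>
    Finset.inf'_le _ (Finset.mem_univ v)
  have hgcont : Continuous g := by
    apply Continuous.finset_inf'_apply
    intro i _
    exact (hdiff i).continuous
  -- time-reversed min
  set h : ℝ → ℝ := fun x => g (t₁ + t₂ - x) with hh
  set B : ℝ → ℝ := fun x => g t₂ - b * (x - t₁) with hB
  have hfc : ContinuousOn h (Icc t₁ t₂) :=
    (hgcont.comp (continuous_const.sub continuous_id)).continuousOn
  have ha : h t₁ ≤ B t₁ := by simp [h, B]
  have hBc : ContinuousOn B (Icc t₁ t₂) :=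
    (continuous_const.sub (continuous_const.mul
      (continuous_id.sub continuous_const))).continuousOn
  have hB' : ∀ x ∈ Ico t₁ t₂, HasDerivWithinAt B (-b) (Ici x) x := by
    intro x _
    have : HasDerivWithinAt (fun x : ℝ => g t₂ - b * (x - t₁)) (0 - b * 1) (Ici x) x :=
      (hasDerivWithinAt_const x _ (g t₂)).sub
        ((((hasDerivWithinAt_id x (Ici x)).sub_const t₁)).const_mul b)
    simpa using this
  have bound : ∀ x ∈ Ico t₁ t₂, ∀ r : ℝ, -b < r → ∃ᶠ z in 𝓝[>] x, slope h x z < r := by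
    intro x hx r hr
    set s := t₁ + t₂ - x with hs
    obtain ⟨u, -, hu⟩ := Finset.exists_mem_eq_inf' (Finset.univ_nonempty (α := V))
      (fun v => L v s)
    have hus : L u s = g s := hu.symm
    have hd : deriv (L u) s ≥ b := hmin s u hus
    have hslope : Tendsto (slope (L u) s) (𝓝[≠] s) (𝓝 (deriv (L u) s)) :=
      hasDerivAt_iff_tendsto_slope.1 ((hdiff u).differentiableAt.hasDerivAt)
    have hev : ∀ᶠ w in 𝓝[<] s, -r < slope (L u) s w := by
      have : ∀ᶠ w in 𝓝[≠] s, slope (L u) s w ∈ Ioi (-r) :=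
        hslope (Ioi_mem_nhds (by linarith))
      exact (this.filter_mono (nhdsWithin_mono s fun w hw => ne_of_lt hw))
    have hmap : Tendsto (fun z : ℝ => t₁ + t₂ - z) (𝓝[>] x) (𝓝[<] s) := by
      rw [tendsto_nhdsWithin_iff]
      constructor
      · exact (tendsto_const_nhds.sub tendsto_id).mono_left nhdsWithin_le_nhds
      · filter_upwards [self_mem_nhdsWithin] with z hz
        simp only [mem_Iio, hs]
        simp only [mem_Ioi] at hz
        linarith
    have hev2 : ∀ᶠ z in 𝓝[>] x, -r < slope (L u) s (t₁ + t₂ - z) := hmap.eventually hev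
    have hevf : ∀ᶠ z in 𝓝[>] x, slope h x z < r := by
      filter_upwards [hev2, self_mem_nhdsWithin] with z hz hz'
      simp only [mem_Ioi] at hz'
      have hzx : (0:ℝ) < z - x := by linarith
      have h1 : h z - h x ≤ L u (t₁ + t₂ - z) - L u s := by
        have h5 := hgle u (t₁ + t₂ - z)
        have h6 : h z = g (t₁ + t₂ - z) := rfl
        have h7 : h x = g s := rfl
        rw [h6, h7, ← hus]
        linarith
      have h2 : slope (L u) s (t₁ + t₂ - z)
          = (L u (t₁ + t₂ - z) - L u s) / (t₁ + t₂ - z - s) := slope_def_field _ _ _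
      have h3 : t₁ + t₂ - z - s = -(z - x) := by rw [hs]; ring
      rw [h3] at h2
      have h4 : L u (t₁ + t₂ - z) - L u s < r * (z - x) := by
        rw [h2, div_neg, neg_lt_neg_iff, div_lt_iff₀ hzx] at hz
        linarith
      rw [slope_def_field, div_lt_iff₀ hzx]
      linarith
    exact hevf.frequently
  have key : ∀ ⦃x⦄, x ∈ Icc t₁ t₂ → h x ≤ B x :=
    image_le_of_liminf_slope_right_le_deriv_boundary hfc ha hBc hB' bound
  have := key (right_mem_Icc.2 h12)
  simp only [h, B] at this
  have hx : t₁ + t₂ - t₂ = t₁ := by ring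
  rw [hx] at this
  linarith
end

section
/- Let I be a type, μ ≥ 0 a real, and est, ε, κ, τ, δ : I → ℝ functions such that for all v ∈ I: ε v ≥ 0, τ v ≥ 0, κ v > 4·ε v + 4·μ·τ v, and 0 < δ v ≤ (κ v − 4·ε v − 4·μ·τ v)/6. Let N : ℕ → Set I be antitone (i.e., N s ⊆ N s' whenever s' ≤ s), let L_u ∈ ℝ, and let s, s' ≥ 1 be natural numbers. Then it is not the case that both of the following hold: (fast rule precondition at level s) there exists w ∈ N s with est w − L_u ≥ s·κ w − ε w, and for all v ∈ N s, L_u − est v ≤ s·κ v + ε v + 2μ·τ v; and (slow rule precondition at level s') for all v ∈ N s', est v − L_u ≤ (s' + 1/2)·κ v + δ v + ε v, and there exists w ∈ N s' with L_u − est w ≥ (s' + 1/2)·κ w − δ w − ε w. -/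
/-- Lemma 2 (mutual exclusion of the fast and slow mode rules): under the
conditions `κ v > 4ε v + 4μτ v` and `0 < δ v ≤ (κ v - 4ε v - 4μτ v)/6`,
the preconditions of the fast mode rule (at level `s`) and of the slow mode
rule (at level `s'`) can never hold simultaneously. -/
theorem fast_slow_rules_mutually_exclusive
    {I : Type*} (μ : ℝ) (hμ : 0 ≤ μ) (est ε κ τ δ : I → ℝ)
    (hε : ∀ v, 0 ≤ ε v) (hτ : ∀ v, 0 ≤ τ v)
    (hκ : ∀ v, κ v > 4 * ε v + 4 * μ * τ v)
    (hδpos : ∀ v, 0 < δ v)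
    (hδle : ∀ v, δ v ≤ (κ v - 4 * ε v - 4 * μ * τ v) / 6)
    (N : ℕ → Set I) (hN : ∀ ⦃s s' : ℕ⦄, s' ≤ s → N s ⊆ N s')
    (Lu : ℝ) (s s' : ℕ) (hs : 1 ≤ s) (hs' : 1 ≤ s') :
    ¬ ((((∃ w ∈ N s, est w - Lu ≥ (s : ℝ) * κ w - ε w) ∧
        (∀ v ∈ N s, Lu - est v ≤ (s : ℝ) * κ v + ε v + 2 * μ * τ v))) ∧
       (((∀ v ∈ N s', est v - Lu ≤ ((s' : ℝ) + 1/2) * κ v + δ v + ε v) ∧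
        (∃ w ∈ N s', Lu - est w ≥ ((s' : ℝ) + 1/2) * κ w - δ w - ε w)))) := by
  rintro ⟨⟨⟨w, hwN, hwfast⟩, hfastall⟩, hslowall, ⟨w', hw'N, hw'slow⟩⟩
  rcases le_or_gt s s' with hle | hlt
  · have hw'Ns : w' ∈ N s := hN hle hw'N
    have h1 := hfastall w' hw'Ns
    have hκw := hκ w'
    have hδ := hδle w'
    have hεw := hε w'
    have hμτ : 0 ≤ μ * τ w' := mul_nonneg hμ (hτ w')
    have hcast : (s : ℝ) ≤ s' := Nat.cast_le.mpr hle
    have hκpos : 0 < κ w' := lt_of_le_of_lt (by linarith) hκw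
    have hprod : 0 ≤ ((s' : ℝ) - s) * κ w' :=
      mul_nonneg (by linarith) hκpos.le
    nlinarith [hw'slow]
  · have hle : s' + 1 ≤ s := hlt
    have hwNs' : w ∈ N s' := hN hlt.le hwN
    have h1 := hslowall w hwNs'
    have hκw := hκ w
    have hδ := hδle w
    have hεw := hε w
    have hμτ : 0 ≤ μ * τ w := mul_nonneg hμ (hτ w)
    have hcast : ((s' : ℝ) + 1) ≤ s := by exact_mod_cast Nat.cast_le.mpr hle
    have hκpos : 0 < κ w := lt_of_le_of_lt (by linarith) hκw
    have hprod : 0 ≤ ((s : ℝ) - s' - 1) * κ w :=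
      mul_nonneg (by linarith) hκpos.le
    nlinarith [hwfast]
end

section
/- Let I be a type, μ ≥ 0 a real, and ε, κ, τ : I → ℝ functions such that for all v ∈ I: ε v ≥ 0, τ v ≥ 0, and κ v > 4·ε v + 4·μ·τ v. Let δ₀ be a real with 0 < δ₀ ≤ (κ v − 4·ε v − 4·μ·τ v)/6 for all v ∈ I. Let N : ℕ → Set I be antitone (N s ⊆ N s' whenever s' ≤ s), let L : I → ℝ, L_u ∈ ℝ, and let s, s' ≥ 1 be natural numbers. Then it is not the case that both of the following hold: (fast condition precondition at level s) there exists w ∈ N s with L w − L_u ≥ s·κ w, and for all v ∈ N s, L_u − L v ≤ s·κ v + 2μ·τ v; and (slow condition precondition at level s') for all v ∈ N s', L v − L_u ≤ (s' + 1/2)·κ v + δ₀, and there exists w ∈ N s' with L_u − L w ≥ (s' + 1/2)·κ w − δ₀. -/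
/-- Mutual exclusivity of the fast mode condition FC and the slow mode
condition SC (consequence of Lemmas 1 and 2): under `κ v > 4ε v + 4μτ v` and
`0 < δ₀ ≤ (κ v - 4ε v - 4μτ v)/6`, the preconditions of FC (at level `s`)
and of SC (at level `s'`) can never hold simultaneously. -/
theorem fast_slow_conditions_mutually_exclusive
    {I : Type*} (μ : ℝ) (hμ : 0 ≤ μ) (ε κ τ : I → ℝ)
    (hε : ∀ v, 0 ≤ ε v) (hτ : ∀ v, 0 ≤ τ v)
    (hκ : ∀ v, κ v > 4 * ε v + 4 * μ * τ v)
    (δ₀ : ℝ) (hδ₀pos : 0 < δ₀)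
    (hδ₀le : ∀ v, δ₀ ≤ (κ v - 4 * ε v - 4 * μ * τ v) / 6)
    (N : ℕ → Set I) (hN : ∀ ⦃s s' : ℕ⦄, s' ≤ s → N s ⊆ N s')
    (L : I → ℝ) (Lu : ℝ) (s s' : ℕ) (hs : 1 ≤ s) (hs' : 1 ≤ s') :
    ¬ ((((∃ w ∈ N s, L w - Lu ≥ (s : ℝ) * κ w) ∧
        (∀ v ∈ N s, Lu - L v ≤ (s : ℝ) * κ v + 2 * μ * τ v))) ∧
       (((∀ v ∈ N s', L v - Lu ≤ ((s' : ℝ) + 1/2) * κ v + δ₀) ∧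
        (∃ w ∈ N s', Lu - L w ≥ ((s' : ℝ) + 1/2) * κ w - δ₀)))) := by
  rintro ⟨⟨⟨w1, hw1, hF1⟩, hF2⟩, hS1, w2, hw2, hS2⟩
  rcases le_or_gt s s' with h | h
  · have hw2' : w2 ∈ N s := hN h hw2
    have A := hF2 w2 hw2'
    have hc : (s : ℝ) ≤ s' := by exact_mod_cast h
    have hκ2 := hκ w2
    have hδ2 := hδ₀le w2
    have hκpos : 0 < κ w2 := by nlinarith [hε w2, mul_nonneg hμ (hτ w2)]
    nlinarith [hε w2, mul_nonneg hμ (hτ w2),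
      mul_nonneg (sub_nonneg.mpr hc) hκpos.le]
  · have hw1' : w1 ∈ N s' := hN h.le hw1
    have C := hS1 w1 hw1'
    have hc : (s' : ℝ) + 1 ≤ s := by exact_mod_cast h
    have hκ1 := hκ w1
    have hδ1 := hδ₀le w1
    have hκpos : 0 < κ w1 := by nlinarith [hε w1, mul_nonneg hμ (hτ w1)]
    nlinarith [hε w1, mul_nonneg hμ (hτ w1),
      mul_nonneg (sub_nonneg.mpr hc) hκpos.le]
end

section
/- Let I be a finite nonempty set, let L : ℝ → ℝ and, for each p ∈ I, g_p : ℝ → ℝ be differentiable functions, let b ∈ ℝ, and let t₁ ≤ t₂ be reals. Define Ξ(t) = max_{p∈I} (L(t) − g_p(t)). Assume Ξ(t) > 0 for all t ∈ [t₁, t₂], and assume that for every t ∈ [t₁, t₂] and every p ∈ I with L(t) − g_p(t) = Ξ(t), the derivative satisfies g_p'(t) ≥ b. Then Ξ(t₂) − Ξ(t₁) ≤ (L(t₂) − L(t₁)) − b·(t₂ − t₁). -/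
open Set Filter Topology

/-- Static-network core of Lemma 6 (pull): if the potential
`Ξ(t) = max_p (L(t) - g_p(t))` is positive throughout `[t₁, t₂]` and every
maximizing index `p` has `g_p' ≥ b` there, then
`Ξ(t₂) - Ξ(t₁) ≤ (L(t₂) - L(t₁)) - b(t₂ - t₁)`. -/
theorem pull_potential_bound
    {I : Type*} [Fintype I] [Nonempty I]
    (L : ℝ → ℝ) (g : I → ℝ → ℝ)
    (hL : Differentiable ℝ L) (hg : ∀ p, Differentiable ℝ (g p))
    (b t₁ t₂ : ℝ) (h12 : t₁ ≤ t₂)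
    (Ξ : ℝ → ℝ)
    (hΞ : ∀ t, Ξ t = Finset.univ.sup' Finset.univ_nonempty (fun p => L t - g p t))
    (hpos : ∀ t ∈ Set.Icc t₁ t₂, 0 < Ξ t)
    (hrate : ∀ t ∈ Set.Icc t₁ t₂, ∀ p : I, L t - g p t = Ξ t → b ≤ deriv (g p) t) :
    Ξ t₂ - Ξ t₁ ≤ (L t₂ - L t₁) - b * (t₂ - t₁) := by
  set h : I → ℝ → ℝ := fun p t => b * t - g p t with hh
  set F : ℝ → ℝ := fun t => Finset.univ.sup' Finset.univ_nonempty (fun p => h p t) with hF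
  -- relation between F and Ξ
  have hFΞ : ∀ t, F t = Ξ t - L t + b * t := by
    intro t
    rw [hΞ t]
    apply le_antisymm
    · apply Finset.sup'_le
      intro p _
      have : L t - g p t ≤ Finset.univ.sup' Finset.univ_nonempty (fun p => L t - g p t) :=
        Finset.le_sup' (fun p => L t - g p t) (Finset.mem_univ p)
      simp only [hh]
      linarith
    · obtain ⟨q, -, hq⟩ := Finset.exists_mem_eq_sup' Finset.univ_nonempty
        (fun p => L t - g p t)
      rw [hq]
      have : h q t ≤ F t := Finset.le_sup' (fun p => h p t) (Finset.mem_univ q)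
      simp only [hh] at this
      linarith
  -- continuity of F
  have hFc : Continuous F := by
    rw [continuous_iff_continuousAt]
    intro x
    have := Filter.Tendsto.finset_sup'_nhds_apply (l := 𝓝 x)
      (f := fun p t => h p t) (g := fun p => h p x) Finset.univ_nonempty
      (fun i _ => ((continuous_const.mul continuous_id).sub (hg i).continuous).continuousAt)
    exact this
  -- main inequality via fencing theorem
  have key : F t₂ ≤ F t₁ := by
    have := image_le_of_liminf_slope_right_le_deriv_boundary
      (f := F) (a := t₁) (b := t₂) (B := fun _ => F t₁) (B' := fun _ => 0)
      hFc.continuousOn le_rfl continuousOn_const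
      (fun x _ => hasDerivWithinAt_const x _ _) ?_ (right_mem_Icc.2 h12)
    · exact this
    intro x hx r hr
    by_contra hc
    rw [Filter.not_frequently] at hc
    -- eventually r ≤ slope F x z
    have hslope : ∀ᶠ z in 𝓝[>] x, r ≤ slope F x z := by
      filter_upwards [hc] with z hz
      exact not_lt.mp hz
    -- pigeonhole: some q maximizes F frequently
    have hex : ∃ q : I, ∃ᶠ z in 𝓝[>] x, F z = h q z := by
      by_contra hq
      push_neg at hq
      have hall : ∀ᶠ z in 𝓝[>] x, ∀ q : I, ¬ F z = h q z := eventually_all.2 hq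
      have hsome : ∀ᶠ z in 𝓝[>] x, ∃ q : I, F z = h q z := by
        apply Filter.Eventually.of_forall
        intro z
        obtain ⟨q, -, hq'⟩ := Finset.exists_mem_eq_sup' Finset.univ_nonempty (fun p => h p z)
        exact ⟨q, hq'⟩
      have : ∀ᶠ _z in 𝓝[>] x, False := by
        filter_upwards [hall, hsome] with z h1 h2
        obtain ⟨q, hq'⟩ := h2
        exact h1 q hq'
      exact (Filter.NeBot.ne (by infer_instance)) (Filter.eventually_false_iff_eq_bot.mp this)
    obtain ⟨q, hqfreq⟩ := hex
    -- q is a maximizer at x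
    have hhq_cont : Continuous (h q) := (continuous_const.mul continuous_id).sub (hg q).continuous
    have hqx : F x = h q x := by
      have h1 : Tendsto F (𝓝[>] x) (𝓝 (F x)) :=
        (hFc.tendsto x).mono_left nhdsWithin_le_nhds
      have h2 : Tendsto (h q) (𝓝[>] x) (𝓝 (h q x)) :=
        (hhq_cont.tendsto x).mono_left nhdsWithin_le_nhds
      exact tendsto_nhds_unique_of_frequently_eq h1 h2 hqfreq
    have hxIcc : x ∈ Set.Icc t₁ t₂ := Set.Ico_subset_Icc_self hx
    have hmax : L x - g q x = Ξ x := by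
      have := hFΞ x
      simp only [hh] at hqx
      linarith [hqx, this]
    have hb : b ≤ deriv (g q) x := hrate x hxIcc q hmax
    -- h q has derivative b - deriv (g q) x ≤ 0 < r at x
    have hder : HasDerivAt (h q) (b - deriv (g q) x) x := by
      have h1 : HasDerivAt (fun t => b * t) b x := by
        simpa using (hasDerivAt_id x).const_mul b
      exact h1.sub ((hg q).differentiableAt.hasDerivAt)
    have htend : Tendsto (slope (h q) x) (𝓝[>] x) (𝓝 (b - deriv (g q) x)) :=
      (hasDerivAt_iff_tendsto_slope.mp hder).mono_left
        (nhdsWithin_mono x (fun z hz => ne_of_gt hz))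
    have hr' : (0:ℝ) < r := hr
    have hev : ∀ᶠ z in 𝓝[>] x, slope (h q) x z < r :=
      htend.eventually_lt_const (by linarith)
    -- contradiction
    have hfalse : ∃ᶠ _z in 𝓝[>] x, False := by
      apply (hqfreq.and_eventually (hslope.and hev)).mono
      rintro z ⟨hz1, hz2, hz3⟩
      have : slope F x z = slope (h q) x z := by
        simp only [slope_def_field, hz1, hqx]
      rw [this] at hz2
      exact absurd hz3 (not_lt.mpr hz2)
    exact hfalse.exists.elim (fun _ hf => hf)
  -- conclude
  have h1 := hFΞ t₁
  have h2 := hFΞ t₂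
  linarith [key]
end
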